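/- arXiv:1912.11618 — 2 statements merged into one kernel-verified Lean document; each statement's English description precedes it below -/
import Mathlib

section
/- Let A be an n×n 0-1 matrix with A^k = A for some integer k ≥ 2. Then the number f(A) of nonzero entries of A satisfies f(A) ≤ γ(n), where γ(n) = (n+1)²/4 if n is odd and γ(n) = (n²+2n)/4 if n is even. -/
/-!
Read `A` as the adjacency matrix of a digraph and call a vertex a core vertex if it has both an
in- and an out-edge. An inner vertex of a walk is a core vertex, so `A ^ (d + 2) = A B ^ d A`,
where `B` is `A` restricted to the core; replacing `k` by `2k - 1` we may assume `k ≥ 3`, and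
then `A = A P A` with `P = B ^ (k - 2)`, and `B ^ k = B`. Every core vertex has an out- and an
in-neighbour in `B`, so the row sums of `B ^ m` grow with `m`; as `B ^ k = B` they are constant,
which forces `B` to be a permutation matrix of the core, and then so is `P`.

Summing the entries of `A = A P A` gives `f(A) = ∑_{P u v = 1} (1 + a u) (1 + b v)`, where `a u`
counts the sources pointing to `u` and `b v` the sinks that `v` points to. With `p` sources, `q`
sinks and `x` core vertices, `a ≤ p`, `b ≤ q`, and `∑ a u b v ≤ p q` because each source-sink
pair is an entry of `A`. For `Q = max p q` the bound `Q (1 + a) (1 + b) ≤ Q (1 + Q) + (1 + Q) a b`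
yields `f(A) ≤ (1 + Q) (x + min p q)`, and `x + p + q ≤ n` bounds this by `(n + 1)² / 4`.
-/

open Matrix

/-- A 0-1 matrix over the integers. -/
def IsZeroOne {α β : Type*} (A : Matrix α β ℤ) : Prop :=
  ∀ i j, A i j = 0 ∨ A i j = 1

/-- The number of nonzero entries of a matrix. -/
def fcount {α β : Type*} [Fintype α] [Fintype β] (A : Matrix α β ℤ) : ℕ :=
  (Finset.univ.filter fun p : α × β => A p.1 p.2 ≠ 0).card

/-- γ(n) = (n+1)²/4 if n is odd and (n²+2n)/4 if n is even. -/
def gamma (n : ℕ) : ℕ := if Odd n then (n + 1) ^ 2 / 4 else (n ^ 2 + 2 * n) / 4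

open Finset

namespace IsZeroOne

variable {α β : Type*} {A : Matrix α β ℤ}

theorem nonneg (h01 : IsZeroOne A) (i : α) (j : β) : 0 ≤ A i j := by
  rcases h01 i j with h | h <;> simp [h]

theorem le_one (h01 : IsZeroOne A) (i : α) (j : β) : A i j ≤ 1 := by
  rcases h01 i j with h | h <;> simp [h]

protected theorem transpose (h01 : IsZeroOne A) : IsZeroOne Aᵀ :=
  fun i j => h01 j i

theorem natCast_fcount [Fintype α] [Fintype β] (h01 : IsZeroOne A) :
    (fcount A : ℤ) = ∑ i, ∑ j, A i j := by
  rw [fcount, natCast_card_filter, ← Fintype.sum_prod_type' fun i j => A i j]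
  refine sum_congr rfl fun x _ => ?_
  rcases h01 x.1 x.2 with h | h <;> simp [h]

end IsZeroOne

namespace Matrix

variable {l m n R : Type*}

section Semiring

variable [Semiring R]

theorem exists_ne_zero_of_mul_apply_ne_zero [Fintype m] {M : Matrix l m R} {N : Matrix m n R}
    {i : l} {j : n} (h : (M * N) i j ≠ 0) : ∃ u, M i u ≠ 0 ∧ N u j ≠ 0 := by
  contrapose! h
  exact sum_eq_zero fun u _ => by by_cases hu : M i u = 0 <;> simp [hu, h]

theorem dotProduct_mulVec_eq_sum [Fintype m] [Fintype n] (x : m → R) (P : Matrix m n R)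
    (y : n → R) : x ⬝ᵥ P *ᵥ y = ∑ u, ∑ v, x u * P u v * y v := by
  simp [dotProduct, mulVec, mul_sum, mul_assoc]

theorem dotProduct_mulVec_congr [Fintype m] [Fintype n] {P : Matrix m n R} {x x' : m → R}
    {y y' : n → R} (h : ∀ u v, P u v ≠ 0 → x u = x' u ∧ y v = y' v) :
    x ⬝ᵥ P *ᵥ y = x' ⬝ᵥ P *ᵥ y' := by
  simp only [dotProduct_mulVec_eq_sum]
  refine sum_congr rfl fun u _ => sum_congr rfl fun v _ => ?_
  by_cases huv : P u v = 0
  · simp [huv]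
  · rw [(h u v huv).1, (h u v huv).2]

end Semiring

section OrderedRing

variable [CommRing R] [LinearOrder R] [IsStrictOrderedRing R] {P : Matrix m n R}

theorem dotProduct_mulVec_le_sum_mul_sum [Fintype m] [Fintype n] (hP : ∀ u v, P u v ≤ 1) {x : m → R} {y : n → R}
    (hx : ∀ u, 0 ≤ x u) (hy : ∀ v, 0 ≤ y v) : x ⬝ᵥ P *ᵥ y ≤ (∑ u, x u) * ∑ v, y v := by
  rw [dotProduct_mulVec_eq_sum, sum_mul_sum]
  exact sum_le_sum fun u _ => sum_le_sum fun v _ =>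
    mul_le_mul_of_nonneg_right (mul_le_of_le_one_right (hx u) (hP u v)) (hy v)

theorem vecMul_apply_le_sum [Fintype m] (hP : ∀ u v, P u v ≤ 1) {x : m → R} (hx : ∀ u, 0 ≤ x u) (v : n) :
    (x ᵥ* P) v ≤ ∑ u, x u :=
  sum_le_sum fun u _ => mul_le_of_le_one_right (hx u) (hP u v)

theorem vecMul_apply_nonneg [Fintype m] (hP : ∀ u v, 0 ≤ P u v) {x : m → R} (hx : ∀ u, 0 ≤ x u) (v : n) :
    0 ≤ (x ᵥ* P) v :=
  sum_nonneg fun u _ => mul_nonneg (hx u) (hP u v)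

theorem mulVec_apply_le_sum [Fintype n] (hP : ∀ u v, P u v ≤ 1) {y : n → R} (hy : ∀ v, 0 ≤ y v) (u : m) :
    (P *ᵥ y) u ≤ ∑ v, y v :=
  sum_le_sum fun v _ => mul_le_of_le_one_left (hy v) (hP u v)

theorem mulVec_apply_nonneg [Fintype n] (hP : ∀ u v, 0 ≤ P u v) {y : n → R} (hy : ∀ v, 0 ≤ y v) (u : m) :
    0 ≤ (P *ᵥ y) u :=
  sum_nonneg fun v _ => mul_nonneg (hP u v) (hy v)

theorem one_add_dotProduct_mulVec_one_add_le [Fintype m] [Fintype n] (hP : ∀ u v, 0 ≤ P u v)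
    {a : m → R} {b : n → R} {p q : R} (hp : 0 ≤ p) (hq : 0 ≤ q) (ha₀ : ∀ u, 0 ≤ a u) (ha : ∀ u, a u ≤ p)
    (hb₀ : ∀ v, 0 ≤ b v) (hb : ∀ v, b v ≤ q) (hab : a ⬝ᵥ P *ᵥ b ≤ p * q) :
    (1 + a) ⬝ᵥ P *ᵥ (1 + b) ≤ (1 + max p q) * (1 ⬝ᵥ P *ᵥ 1 + min p q) := by
  rcases (hp.trans (le_max_left p q)).eq_or_lt with hQ | hQ
  · have ha0 : a = 0 :=
      funext fun u => le_antisymm ((ha u).trans ((le_max_left p q).trans hQ.ge)) (ha₀ u)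
    have hb0 : b = 0 :=
      funext fun v => le_antisymm ((hb v).trans ((le_max_right p q).trans hQ.ge)) (hb₀ v)
    have hm : min p q = 0 := le_antisymm (min_le_max.trans hQ.ge) (le_min hp hq)
    simp [ha0, hb0, hm, ← hQ]
  set Q := max p q
  refine le_of_mul_le_mul_left ?_ hQ
  have hterm : ∀ u v, Q * ((1 + a u) * P u v * (1 + b v))
      ≤ Q * (1 + Q) * (1 * P u v * 1) + (1 + Q) * (a u * P u v * b v) := by
    intro u v
    -- the right side minus the left side is this product
    have key : 0 ≤ (Q - a u) * (Q - b v) * P u v := mul_nonneg (mul_nonneg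
      (sub_nonneg.2 ((ha u).trans (le_max_left p q)))
      (sub_nonneg.2 ((hb v).trans (le_max_right p q)))) (hP u v)
    linarith
  calc Q * ((1 + a) ⬝ᵥ P *ᵥ (1 + b))
      ≤ Q * (1 + Q) * (1 ⬝ᵥ P *ᵥ 1) + (1 + Q) * (a ⬝ᵥ P *ᵥ b) := by
        simp only [dotProduct_mulVec_eq_sum, mul_sum, ← sum_add_distrib, Pi.add_apply,
          Pi.one_apply]
        exact sum_le_sum fun u _ => sum_le_sum fun v _ => hterm u v
    _ ≤ Q * (1 + Q) * (1 ⬝ᵥ P *ᵥ 1) + (1 + Q) * (p * q) := by gcongr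
    _ = Q * ((1 + Q) * (1 ⬝ᵥ P *ᵥ 1 + min p q)) := by rw [← max_mul_min p q]; ring

end OrderedRing

theorem sum_row_eq_one_of_pow_eq_self [Fintype n] [DecidableEq n] {M : Matrix n n ℤ}
    (hM : ∀ i j, 0 ≤ M i j) {K : ℕ} (hK : 2 ≤ K) (hMK : M ^ K = M)
    (hout : ∀ i j, M i j ≠ 0 → ∃ l, M j l ≠ 0) {i j : n} (hij : M i j ≠ 0) :
    ∑ l, M j l = 1 := by
  set ρ := M *ᵥ 1 with hρ
  have hρ_pos : ∀ i j, M i j ≠ 0 → 1 ≤ ρ j := by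
    intro i j hij
    obtain ⟨l, hl⟩ := hout i j hij
    calc 1 ≤ M j l := by have := hM j l; omega
      _ ≤ ρ j := by
        simpa [hρ, mulVec, dotProduct] using single_le_sum (fun l _ => hM j l) (mem_univ l)
  have hterm : ∀ m v w, (M ^ (m + 1)) v w ≤ (M ^ (m + 1)) v w * ρ w := by
    intro m v w
    by_cases hvw : (M ^ (m + 1)) v w = 0
    · simp [hvw]
    rw [pow_succ] at hvw
    obtain ⟨u, -, huw⟩ := exists_ne_zero_of_mul_apply_ne_zero hvw
    exact le_mul_of_one_le_right (pow_apply_nonneg hM _ v w) (hρ_pos u w huw)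
  have hsucc : ∀ m v, (M ^ (m + 2) *ᵥ 1) v = ∑ w, (M ^ (m + 1)) v w * ρ w := by
    intro m v
    rw [pow_succ _ (m + 1), ← mulVec_mulVec]
    rfl
  -- every vertex a walk can reach has an out-edge, so row sums of powers of `M` can only grow
  have hmono : Monotone fun m => M ^ (m + 1) *ᵥ 1 := by
    refine monotone_nat_of_le_succ fun m v => ?_
    simp only [hsucc]
    simpa [mulVec, dotProduct] using sum_le_sum fun w _ => hterm m v w
  have hsq : M ^ 2 *ᵥ 1 = M *ᵥ 1 := by
    have h : M ^ (1 + 1) *ᵥ 1 ≤ M ^ (K - 1 + 1) *ᵥ 1 := hmono (show 1 ≤ K - 1 by omega)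
    rw [Nat.sub_add_cancel (by omega), hMK] at h
    exact le_antisymm h (by simpa using hmono (Nat.zero_le 1))
  have hrow : ∑ w, M i w = ∑ w, M i w * ρ w := by
    simpa [mulVec, dotProduct] using ((hsucc 0 i).symm.trans (congrFun hsq i)).symm
  have hi : M i j = M i j * ρ j :=
    (sum_eq_sum_iff_of_le fun w _ => by simpa using hterm 0 i w).1 hrow j (mem_univ j)
  simpa [hρ, mulVec, dotProduct] using (mul_eq_left₀ hij).1 hi.symm

variable [Fintype n]

section Core

variable [Semiring R] (A : Matrix n n R)

open Classical in
noncomputable def core : Finset n := {i | (∃ j, A i j ≠ 0) ∧ ∃ j, A j i ≠ 0}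

open Classical in
noncomputable def sources : Finset n := {i | (∃ j, A i j ≠ 0) ∧ ∀ j, A j i = 0}

open Classical in
noncomputable def sinks : Finset n := {j | (∃ i, A i j ≠ 0) ∧ ∀ i, A j i = 0}

variable {A}

theorem mem_core {i : n} : i ∈ core A ↔ (∃ j, A i j ≠ 0) ∧ ∃ j, A j i ≠ 0 := by
  simp [core]

theorem mem_sources {i : n} : i ∈ sources A ↔ (∃ j, A i j ≠ 0) ∧ ∀ j, A j i = 0 := by
  simp [sources]

theorem mem_sinks {j : n} : j ∈ sinks A ↔ (∃ i, A i j ≠ 0) ∧ ∀ i, A j i = 0 := by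
  simp [sinks]

theorem mem_core_of_ne_zero {i j k : n} (hij : A i j ≠ 0) (hjk : A j k ≠ 0) : j ∈ core A :=
  mem_core.2 ⟨⟨k, hjk⟩, i, hij⟩

theorem sources_transpose : sources Aᵀ = sinks A := by
  ext i
  simp [mem_sources, mem_sinks]

theorem disjoint_core_sources : Disjoint (core A) (sources A) :=
  disjoint_left.2 fun i hc hs => by
    obtain ⟨j, hj⟩ := (mem_core.1 hc).2
    exact hj ((mem_sources.1 hs).2 j)

variable [DecidableEq n]

variable (A) in
theorem card_core_add_card_sources_add_card_sinks_le :
    #(core A) + #(sources A) + #(sinks A) ≤ Fintype.card n := by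
  have h : Disjoint (core A ∪ sources A) (sinks A) := disjoint_left.2 fun i hcs ht => by
    obtain ⟨j, hj⟩ : ∃ j, A i j ≠ 0 := by
      rcases mem_union.1 hcs with hc | hs
      exacts [(mem_core.1 hc).1, (mem_sources.1 hs).1]
    exact hj ((mem_sinks.1 ht).2 j)
  rw [← card_union_of_disjoint disjoint_core_sources, ← card_union_of_disjoint h]
  exact card_le_univ _

variable (A) in
noncomputable def coreProj : Matrix n n R := diagonal fun i => if i ∈ core A then 1 else 0

variable (A) in
noncomputable def coreRestrict : Matrix n n R := coreProj A * A * coreProj A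

theorem coreRestrict_apply (i j : n) :
    coreRestrict A i j = if i ∈ core A ∧ j ∈ core A then A i j else 0 := by
  by_cases hi : i ∈ core A <;> by_cases hj : j ∈ core A <;>
    simp [coreRestrict, coreProj, diagonal_mul, mul_diagonal, hi, hj]

theorem apply_eq_coreRestrict_apply_add {i u : n} (hu : u ∈ core A) :
    A i u = coreRestrict A i u + (if i ∈ sources A then 1 else 0) * A i u := by
  rw [coreRestrict_apply]
  by_cases hi : i ∈ core A
  · simp [hi, hu, disjoint_left.1 disjoint_core_sources hi]
  by_cases hiu : A i u = 0
  · simp [hiu]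
  have hs : i ∈ sources A := mem_sources.2 ⟨⟨u, hiu⟩, fun j => by
    by_contra hj
    exact hi (mem_core.2 ⟨⟨u, hiu⟩, j, hj⟩)⟩
  simp [hi, hs]

theorem coreProj_mul_self : coreProj A * coreProj A = coreProj A := by
  simp only [coreProj, diagonal_mul_diagonal]
  congr! 2 with i
  split_ifs <;> simp

theorem mul_coreProj_mul : A * coreProj A * A = A * A := by
  rw [mul_assoc]
  ext i k
  rw [mul_apply, mul_apply]
  refine sum_congr rfl fun j _ => ?_
  rw [coreProj, diagonal_mul]
  by_cases hij : A i j = 0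
  · simp [hij]
  by_cases hjk : A j k = 0
  · simp [hjk]
  simp [mem_core_of_ne_zero hij hjk]

theorem coreProj_mul_coreRestrict_pow {m : ℕ} (hm : m ≠ 0) :
    coreProj A * coreRestrict A ^ m = coreRestrict A ^ m := by
  obtain ⟨m, rfl⟩ := Nat.exists_eq_succ_of_ne_zero hm
  rw [pow_succ', coreRestrict, ← mul_assoc, ← mul_assoc, ← mul_assoc, coreProj_mul_self]

theorem coreRestrict_pow_mul_coreProj {m : ℕ} (hm : m ≠ 0) :
    coreRestrict A ^ m * coreProj A = coreRestrict A ^ m := by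
  obtain ⟨m, rfl⟩ := Nat.exists_eq_succ_of_ne_zero hm
  rw [pow_succ, coreRestrict, mul_assoc, mul_assoc (coreProj A * A), coreProj_mul_self]

theorem coreProj_mul_coreRestrict : coreProj A * coreRestrict A = coreRestrict A := by
  simpa using coreProj_mul_coreRestrict_pow (A := A) one_ne_zero

theorem mem_core_of_coreRestrict_pow_ne_zero {m : ℕ} (hm : m ≠ 0) {u v : n}
    (h : (coreRestrict A ^ m) u v ≠ 0) : u ∈ core A ∧ v ∈ core A := by
  rw [← coreProj_mul_coreRestrict_pow hm, ← coreRestrict_pow_mul_coreProj hm] at h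
  simp only [coreProj, diagonal_mul, mul_diagonal] at h
  by_contra huv
  rw [not_and_or] at huv
  rcases huv with hu | hv <;> simp_all

theorem mul_coreRestrict_pow_mul_coreProj_mul (d : ℕ) :
    A * coreRestrict A ^ d * coreProj A * A = A * coreRestrict A ^ d * A := by
  cases d with
  | zero => rw [pow_zero, mul_one, mul_coreProj_mul]
  | succ d => rw [mul_assoc A, coreRestrict_pow_mul_coreProj d.succ_ne_zero]

theorem pow_add_two_eq (d : ℕ) : A ^ (d + 2) = A * coreRestrict A ^ d * A := by
  induction d with
  | zero => simp [sq]
  | succ d ih =>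
    calc A ^ (d + 2 + 1) = A * coreRestrict A ^ d * A * A := by rw [pow_succ, ih]
      _ = A * coreRestrict A ^ d * coreProj A * (A * coreProj A * A) := by
        rw [mul_coreProj_mul, ← mul_coreRestrict_pow_mul_coreProj_mul]; simp only [mul_assoc]
      _ = A * coreRestrict A ^ (d + 1) * A := by simp only [pow_succ, coreRestrict, mul_assoc]

theorem eq_mul_coreRestrict_pow_mul {K : ℕ} (hK : 3 ≤ K) (hAK : A ^ K = A) :
    A = A * coreRestrict A ^ (K - 2) * A := by
  rw [← pow_add_two_eq, Nat.sub_add_cancel (by omega), hAK]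

theorem coreRestrict_pow_eq_self {K : ℕ} (hK : 3 ≤ K) (hAK : A ^ K = A) :
    coreRestrict A ^ K = coreRestrict A := by
  set P := coreRestrict A ^ (K - 2) with hP
  have hPE : coreProj A * P * coreProj A = P := by
    rw [hP, coreProj_mul_coreRestrict_pow (by omega), coreRestrict_pow_mul_coreProj (by omega)]
  calc coreRestrict A ^ K = coreRestrict A * P * coreRestrict A := by
        rw [hP, ← pow_succ', ← pow_succ]
        congr 1
        omega
    _ = coreProj A * (A * (coreProj A * P * coreProj A) * A) * coreProj A := by
        simp only [coreRestrict, mul_assoc]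
    _ = coreRestrict A := by rw [hPE, ← eq_mul_coreRestrict_pow_mul hK hAK, coreRestrict]

theorem coreRestrict_row_ne_zero {K : ℕ} (hK : 3 ≤ K) (hAK : A ^ K = A) {i : n}
    (hi : i ∈ core A) : ∃ j, coreRestrict A i j ≠ 0 := by
  obtain ⟨w, hw⟩ := (mem_core.1 hi).1
  rw [eq_mul_coreRestrict_pow_mul hK hAK, ← coreProj_mul_coreRestrict_pow (by omega),
    ← mul_assoc] at hw
  obtain ⟨v, hv, -⟩ := exists_ne_zero_of_mul_apply_ne_zero hw
  obtain ⟨u, hu, -⟩ := exists_ne_zero_of_mul_apply_ne_zero hv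
  rw [coreProj, mul_diagonal] at hu
  have hu' : u ∈ core A := by by_contra h; simp [h] at hu
  refine ⟨u, ?_⟩
  rw [coreRestrict_apply, if_pos ⟨hi, hu'⟩]
  simpa [hu'] using hu

end Core

section CommSemiring

variable [CommSemiring R] {A : Matrix n n R}

theorem core_transpose : core Aᵀ = core A := by
  ext i
  simp only [mem_core, transpose_apply, and_comm]

variable [DecidableEq n]

theorem coreRestrict_transpose : coreRestrict Aᵀ = (coreRestrict A)ᵀ := by
  simp only [coreRestrict, coreProj, core_transpose, transpose_mul, diagonal_transpose, mul_assoc]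

theorem coreRestrict_col_ne_zero {K : ℕ} (hK : 3 ≤ K) (hAK : A ^ K = A) {i : n}
    (hi : i ∈ core A) : ∃ j, coreRestrict A j i ≠ 0 := by
  have hAKt : Aᵀ ^ K = Aᵀ := by rw [← transpose_pow, hAK]
  simpa [coreRestrict_transpose] using
    coreRestrict_row_ne_zero hK hAKt (core_transpose (A := A) ▸ hi)

end CommSemiring

section ZeroOne

variable [DecidableEq n] {A : Matrix n n ℤ} {K : ℕ}

theorem coreRestrict_nonneg (h01 : IsZeroOne A) (i j : n) : 0 ≤ coreRestrict A i j := by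
  rw [coreRestrict_apply]
  split_ifs
  · exact h01.nonneg i j
  · exact le_rfl

theorem sum_coreRestrict_row (h01 : IsZeroOne A) (hK : 3 ≤ K) (hAK : A ^ K = A) {i : n}
    (hi : i ∈ core A) : ∑ j, coreRestrict A i j = 1 := by
  obtain ⟨l, hl⟩ := coreRestrict_col_ne_zero hK hAK hi
  refine sum_row_eq_one_of_pow_eq_self (coreRestrict_nonneg h01) (by omega)
    (coreRestrict_pow_eq_self hK hAK) (fun i j hij => ?_) hl
  rw [coreRestrict_apply] at hij
  exact coreRestrict_row_ne_zero hK hAK (by by_contra h; simp [h] at hij)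

theorem sum_coreRestrict_col (h01 : IsZeroOne A) (hK : 3 ≤ K) (hAK : A ^ K = A) {j : n}
    (hj : j ∈ core A) : ∑ i, coreRestrict A i j = 1 := by
  have hAKt : Aᵀ ^ K = Aᵀ := by rw [← transpose_pow, hAK]
  simpa [coreRestrict_transpose] using
    sum_coreRestrict_row h01.transpose hK hAKt (core_transpose (A := A) ▸ hj)

theorem one_vecMul_coreRestrict_pow (h01 : IsZeroOne A) (hK : 3 ≤ K) (hAK : A ^ K = A) {m : ℕ}
    (hm : m ≠ 0) : 1 ᵥ* coreRestrict A ^ m = fun j => if j ∈ core A then 1 else 0 := by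
  have hB : 1 ᵥ* coreRestrict A = fun j => if j ∈ core A then 1 else 0 := by
    funext j
    simp only [vecMul, dotProduct, Pi.one_apply, one_mul]
    split_ifs with hj
    · exact sum_coreRestrict_col h01 hK hAK hj
    · exact sum_eq_zero fun i _ => by simp [coreRestrict_apply, hj]
  have hE : (fun j => if j ∈ core A then 1 else 0) = (1 : n → ℤ) ᵥ* coreProj A := by
    funext j
    simp [coreProj, vecMul_diagonal]
  induction m with
  | zero => contradiction
  | succ m ih =>
    rcases eq_or_ne m 0 with rfl | hm0
    · simpa using hB
    calc 1 ᵥ* coreRestrict A ^ (m + 1) = (1 ᵥ* coreProj A) ᵥ* coreRestrict A := by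
          rw [pow_succ, ← vecMul_vecMul, ih hm0, hE]
      _ = _ := by rw [vecMul_vecMul, coreProj_mul_coreRestrict, hB]

theorem one_vecMul_apply_of_mem_core (h01 : IsZeroOne A) (hK : 3 ≤ K) (hAK : A ^ K = A)
    {u : n} (hu : u ∈ core A) :
    (1 ᵥ* A) u = 1 + ((fun i => if i ∈ sources A then 1 else 0) ᵥ* A) u := by
  simp only [vecMul, dotProduct, Pi.one_apply, one_mul]
  calc ∑ i, A i u = ∑ i, (coreRestrict A i u + (if i ∈ sources A then 1 else 0) * A i u) :=
        sum_congr rfl fun i _ => apply_eq_coreRestrict_apply_add hu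
    _ = _ := by rw [sum_add_distrib, sum_coreRestrict_col h01 hK hAK hu]

theorem mulVec_one_apply_of_mem_core (h01 : IsZeroOne A) (hK : 3 ≤ K) (hAK : A ^ K = A)
    {v : n} (hv : v ∈ core A) :
    (A *ᵥ 1) v = 1 + (A *ᵥ fun j => if j ∈ sinks A then 1 else 0) v := by
  have hAKt : Aᵀ ^ K = Aᵀ := by rw [← transpose_pow, hAK]
  simpa [vecMul_transpose, sources_transpose] using
    one_vecMul_apply_of_mem_core h01.transpose hK hAKt (core_transpose (A := A) ▸ hv)

end ZeroOne

end Matrix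

theorem fcount_le_of_pow_eq_self {n : Type*} [Fintype n] [DecidableEq n] {A : Matrix n n ℤ}
    {K : ℕ} (h01 : IsZeroOne A) (hK : 3 ≤ K) (hAK : A ^ K = A) :
    fcount A ≤ (1 + max #(sources A) #(sinks A)) * (#(core A) + min #(sources A) #(sinks A)) := by
  set P := coreRestrict A ^ (K - 2)
  set eS : n → ℤ := fun i => if i ∈ sources A then 1 else 0
  set eT : n → ℤ := fun j => if j ∈ sinks A then 1 else 0
  have heS : ∀ i, 0 ≤ eS i := fun i => by simp only [eS]; split_ifs <;> norm_num
  have heT : ∀ j, 0 ≤ eT j := fun j => by simp only [eT]; split_ifs <;> norm_num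
  have hsandwich : ∀ x y : n → ℤ, x ⬝ᵥ A *ᵥ y = (x ᵥ* A) ⬝ᵥ P *ᵥ (A *ᵥ y) := by
    intro x y
    conv_lhs => rw [eq_mul_coreRestrict_pow_mul hK hAK]
    rw [← mulVec_mulVec, ← mulVec_mulVec, dotProduct_mulVec]
  have hsupp : ∀ u v, P u v ≠ 0 → u ∈ core A ∧ v ∈ core A :=
    fun u v => mem_core_of_coreRestrict_pow_ne_zero (by omega)
  have hcount : (fcount A : ℤ) = (1 + eS ᵥ* A) ⬝ᵥ P *ᵥ (1 + A *ᵥ eT) := by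
    rw [h01.natCast_fcount, show ∑ i, ∑ j, A i j = 1 ⬝ᵥ A *ᵥ 1 by simp [dotProduct_mulVec_eq_sum],
      hsandwich]
    refine dotProduct_mulVec_congr fun u v huv => ⟨?_, ?_⟩
    · exact one_vecMul_apply_of_mem_core h01 hK hAK (hsupp u v huv).1
    · exact mulVec_one_apply_of_mem_core h01 hK hAK (hsupp u v huv).2
  have hmass : 1 ⬝ᵥ P *ᵥ 1 = #(core A) := by
    rw [dotProduct_mulVec, one_vecMul_coreRestrict_pow h01 hK hAK (by omega)]
    simp [dotProduct]
  have hbudget : (eS ᵥ* A) ⬝ᵥ P *ᵥ (A *ᵥ eT) ≤ #(sources A) * #(sinks A) := by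
    rw [← hsandwich]
    simpa [eS, eT] using dotProduct_mulVec_le_sum_mul_sum h01.le_one heS heT
  have key := one_add_dotProduct_mulVec_one_add_le
    (pow_apply_nonneg (coreRestrict_nonneg h01) _) (Nat.cast_nonneg _) (Nat.cast_nonneg _)
    (vecMul_apply_nonneg h01.nonneg heS)
    (fun u => (vecMul_apply_le_sum h01.le_one heS u).trans (by simp [eS]))
    (mulVec_apply_nonneg h01.nonneg heT)
    (fun v => (mulVec_apply_le_sum h01.le_one heT v).trans (by simp [eT])) hbudget
  rw [← hcount, hmass] at key
  exact_mod_cast key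

theorem pow_two_mul_sub_one_eq_self {M : Type*} [Monoid M] {a : M} {k : ℕ} (hk : 1 ≤ k)
    (h : a ^ k = a) : a ^ (2 * k - 1) = a := by
  rw [show 2 * k - 1 = k - 1 + k by omega, pow_add, h, ← pow_succ, Nat.sub_add_cancel hk, h]

theorem Nat.mul_le_sq_div_four {a b N : ℕ} (h : a + b ≤ N) : a * b ≤ N ^ 2 / 4 := by
  rw [Nat.le_div_iff_mul_le four_pos]
  calc a * b * 4 = 4 * a * b := by ring
    _ ≤ (a + b) ^ 2 := four_mul_le_sq_add a b
    _ ≤ N ^ 2 := Nat.pow_le_pow_left h 2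

theorem gamma_eq (n : ℕ) : gamma n = (n + 1) ^ 2 / 4 := by
  rw [gamma]
  split_ifs with hn
  · rfl
  obtain ⟨t, rfl⟩ := Nat.not_odd_iff_even.1 hn
  have h1 : (t + t + 1) ^ 2 = 4 * (t * t + t) + 1 := by ring
  have h2 : (t + t) ^ 2 + 2 * (t + t) = 4 * (t * t + t) := by ring
  omega

theorem stmt13 {n k : ℕ} (hk : 2 ≤ k) (A : Matrix (Fin n) (Fin n) ℤ)
    (h01 : IsZeroOne A) (hA : A ^ k = A) :
    fcount A ≤ gamma n := by
  have hcard := card_core_add_card_sources_add_card_sinks_le A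
  rw [Fintype.card_fin] at hcard
  calc fcount A
      ≤ (1 + max #(sources A) #(sinks A)) * (#(core A) + min #(sources A) #(sinks A)) :=
        fcount_le_of_pow_eq_self h01 (by omega) (pow_two_mul_sub_one_eq_self (by omega) hA)
    _ ≤ (n + 1) ^ 2 / 4 := Nat.mul_le_sq_div_four (by grind [max_add_min])
    _ = gamma n := (gamma_eq n).symm
end

section
/- Let A = [[0, uᵀ, z],[0, B, v],[0, 0, 0]] be an n×n 0-1 matrix written with first row/column and last row/column split off, where u, v are 0-1 column vectors of length n−2 and z ∈ {0,1}. If A² is a 0-1 matrix, then f(u) + f(v) + z ≤ n, where f counts the number of nonzero entries. -/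
open Matrix

/-- The block matrix [[0, X, Z],[0, B, Y],[0, 0, 0]] with square zero diagonal blocks. -/
def blockH {α β γ : Type*} (X : Matrix α β ℤ) (P : Matrix β β ℤ)
    (Y : Matrix β γ ℤ) (Z : Matrix α γ ℤ) : Matrix (α ⊕ β ⊕ γ) (α ⊕ β ⊕ γ) ℤ :=
  Matrix.fromBlocks 0 (Matrix.fromCols X Z) 0 (Matrix.fromBlocks P Y 0 0)

/-
Only the top-right corner of A² matters: it equals uᵀv, which for 0-1 vectors counts the
common support of u and v. So A²(1,n) ≤ 1 means the supports of u and v overlap in at most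
one of the n - 2 middle positions, whence f(u) + f(v) ≤ (n - 2) + 1, and z adds at most 1.
-/

section BlockH

variable {α β γ : Type*} (X : Matrix α β ℤ) (P : Matrix β β ℤ) (Y : Matrix β γ ℤ)
  (Z : Matrix α γ ℤ)

theorem blockH_mul_self_inl_inr_inr [Fintype α] [Fintype β] [Fintype γ] (a : α) (c : γ) :
    (blockH X P Y Z * blockH X P Y Z) (Sum.inl a) (Sum.inr (Sum.inr c)) = (X * Y) a c := by
  simp [blockH, mul_apply, Fintype.sum_sum_type]

variable {X P Y Z}

theorem IsZeroOne.of_blockH_left (h : IsZeroOne (blockH X P Y Z)) : IsZeroOne X :=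
  fun a b => by simpa [blockH] using h (Sum.inl a) (Sum.inr (Sum.inl b))

theorem IsZeroOne.of_blockH_right (h : IsZeroOne (blockH X P Y Z)) : IsZeroOne Y :=
  fun b c => by simpa [blockH] using h (Sum.inr (Sum.inl b)) (Sum.inr (Sum.inr c))

end BlockH

section Count

variable {α β γ : Type*} [Fintype α] [Fintype β] [Fintype γ]

theorem fcount_le_card (A : Matrix α β ℤ) : fcount A ≤ Fintype.card α * Fintype.card β := by
  simpa [fcount] using Finset.card_filter_le (Finset.univ : Finset (α × β)) _

theorem fcount_of_unique_left [Unique α] (X : Matrix α β ℤ) :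
    fcount X = (Finset.univ.filter fun j => X default j ≠ 0).card := by
  classical
  refine Finset.card_bij' (fun p _ => p.2) (fun j _ => (default, j)) ?_ ?_ ?_ ?_ <;>
    simp +contextual [Prod.ext_iff, Unique.eq_default]

theorem fcount_of_unique_right [Unique γ] (Y : Matrix β γ ℤ) :
    fcount Y = (Finset.univ.filter fun i => Y i default ≠ 0).card := by
  classical
  refine Finset.card_bij' (fun p _ => p.1) (fun i _ => (i, default)) ?_ ?_ ?_ ?_ <;>
    simp +contextual [Prod.ext_iff, Unique.eq_default]

theorem sum_mul_eq_card_inter_of_zero_or_one [DecidableEq β] {x y : β → ℤ}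
    (hx : ∀ i, x i = 0 ∨ x i = 1) (hy : ∀ i, y i = 0 ∨ y i = 1) :
    ∑ i, x i * y i =
      ((Finset.univ.filter fun i => x i ≠ 0) ∩ Finset.univ.filter fun i => y i ≠ 0).card := by
  rw [← Finset.filter_and, Finset.card_filter, Nat.cast_sum]
  refine Finset.sum_congr rfl fun i _ => ?_
  rcases hx i with h | h <;> rcases hy i with h' | h' <;> simp [h, h']

theorem fcount_add_fcount_le_of_mul_le_one [Unique α] [Unique γ] {X : Matrix α β ℤ}
    {Y : Matrix β γ ℤ} (hX : IsZeroOne X) (hY : IsZeroOne Y)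
    (hXY : (X * Y) default default ≤ 1) :
    fcount X + fcount Y ≤ Fintype.card β + 1 := by
  set S := Finset.univ.filter fun j => X default j ≠ 0
  set T := Finset.univ.filter fun j => Y j default ≠ 0
  classical
  have hinter : (S ∩ T).card ≤ 1 := by
    have hcount : (X * Y) default default = (S ∩ T).card :=
      sum_mul_eq_card_inter_of_zero_or_one (hX default) (hY · default)
    omega
  have hunion : (S ∪ T).card ≤ Fintype.card β := Finset.card_le_univ _
  rw [fcount_of_unique_left, fcount_of_unique_right]
  change S.card + T.card ≤ _
  have hinclusion_exclusion := Finset.card_union_add_card_inter S T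
  omega

end Count

/-- A = [[0, uᵀ, z],[0, B, v],[0, 0, 0]] with u, v 0-1 vectors of length n-2 and
z ∈ {0,1}: if A² is a 0-1 matrix, then f(u) + f(v) + z ≤ n. -/
theorem stmt18 {n m : ℕ} (hm : n = m + 2)
    (u : Matrix (Fin 1) (Fin m) ℤ) (B : Matrix (Fin m) (Fin m) ℤ)
    (v : Matrix (Fin m) (Fin 1) ℤ) (z : Matrix (Fin 1) (Fin 1) ℤ)
    (h01 : IsZeroOne (blockH u B v z))
    (hsq : IsZeroOne ((blockH u B v z) * (blockH u B v z))) :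
    fcount u + fcount v + fcount z ≤ n := by
  have huv : (u * v) default default ≤ 1 := by
    rcases hsq (Sum.inl 0) (Sum.inr (Sum.inr 0)) with h | h <;>
      rw [blockH_mul_self_inl_inr_inr] at h <;> simp [h]
  have hcorner := fcount_add_fcount_le_of_mul_le_one h01.of_blockH_left h01.of_blockH_right huv
  have hz : fcount z ≤ 1 := by simpa using fcount_le_card z
  simp only [Fintype.card_fin] at hcorner
  omega
end
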